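/- Let a, b ≥ 1 and let T be an increasing tableau of shape a×b with entries at most a+b. Then T fails to be packed with maximum entry exactly a+b if and only if there exists r ∈ {0,1,…,a+b−1} such that T(i,j) = i+j−1 whenever i+j−2 < r and T(i,j) = i+j whenever i+j−2 ≥ r. In particular, exactly a+b tableaux in Inc^{a+b}(a×b) are not packed with maximum entry exactly a+b. -/
import Mathlib


open Polynomial

/-- An increasing tableau of rectangular shape `a × b` (cells indexed from 0) with
entries in `{1, …, m}`, strictly increasing along rows and columns, and normalized
to be `0` outside the shape. -/
def IsInc (a b m : ℕ) (T : ℕ → ℕ → ℕ) : Prop :=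
  (∀ i j, i < a → j < b → 1 ≤ T i j ∧ T i j ≤ m) ∧
  (∀ i j j', i < a → j < j' → j' < b → T i j < T i j') ∧
  (∀ i i' j, i < i' → i' < a → j < b → T i j < T i' j) ∧
  (∀ i j, ¬(i < a ∧ j < b) → T i j = 0)

/-- The tableau is packed with maximum entry exactly `m`:
every value `1, …, m` appears. -/
def IsPacked (a b m : ℕ) (T : ℕ → ℕ → ℕ) : Prop :=
  ∀ v, 1 ≤ v → v ≤ m → ∃ i j, i < a ∧ j < b ∧ T i j = v

/-- The minimal label among the (at most two) filled southeast neighbors of cell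
`(i,j)` in a partial filling `F` (`0` denotes an empty cell); `0` if there is no
filled southeast neighbor. -/
def seMin (a b : ℕ) (F : ℕ → ℕ → ℕ) (i j : ℕ) : ℕ :=
  let s := if i + 1 < a then F (i + 1) j else 0
  let e := if j + 1 < b then F i (j + 1) else 0
  if s = 0 then e else if e = 0 then s else min s e

/-- One simultaneous K-jeu-de-taquin sliding step: every empty cell takes the
minimal label of its filled southeast neighbors, and that label is erased from
each southeast neighbor in which it appears. -/
def kStep (a b : ℕ) (F : ℕ → ℕ → ℕ) : ℕ → ℕ → ℕ := fun i j =>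
  if i < a ∧ j < b then
    if F i j = 0 then seMin a b F i j
    else if (0 < i ∧ F (i - 1) j = 0 ∧ seMin a b F (i - 1) j = F i j) ∨
            (0 < j ∧ F i (j - 1) = 0 ∧ seMin a b F i (j - 1) = F i j) then 0
    else F i j
  else 0

/-- K-promotion on increasing tableaux of rectangular shape `a × b` with entries
at most `m`: delete the entry `1`, slide repeatedly (for a rectangle, `a + b`
steps more than suffice for the process to stabilize), fill empty cells with
`m + 1`, and subtract `1` from every entry. -/
def KPro (a b m : ℕ) (T : ℕ → ℕ → ℕ) : ℕ → ℕ → ℕ := fun i j =>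
  if i < a ∧ j < b then
    let G := (kStep a b)^[a + b]
      (fun i' j' => if i' < a ∧ j' < b then (if T i' j' = 1 then 0 else T i' j') else 0)
    if G i j = 0 then m else G i j - 1
  else 0

/-- `p` is a cell of the product-of-chains poset `[a] × [b]` (indexed from 0). -/
def IsCell (a b : ℕ) (p : ℕ × ℕ) : Prop := p.1 < a ∧ p.2 < b

/-- `I` is an order ideal (downward-closed subset) of the poset `[a] × [b]`. -/
def IsIdeal (a b : ℕ) (I : Set (ℕ × ℕ)) : Prop :=
  (∀ p ∈ I, IsCell a b p) ∧ ∀ p q : ℕ × ℕ, q ∈ I → p ≤ q → p ∈ I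

/-- `S` is an upper set (order filter, upward-closed subset) of the poset `[a] × [b]`. -/
def IsUpper (a b : ℕ) (S : Set (ℕ × ℕ)) : Prop :=
  (∀ p ∈ S, IsCell a b p) ∧ ∀ p q : ℕ × ℕ, p ∈ S → IsCell a b q → p ≤ q → q ∈ S

/-- Rowmotion on order ideals of `[a] × [b]`: `I` is sent to the order ideal
generated by the minimal elements of the complement of `I`. -/
def Row (a b : ℕ) (I : Set (ℕ × ℕ)) : Set (ℕ × ℕ) :=
  {p | ∃ q, (IsCell a b q ∧ q ∉ I) ∧
        (∀ r, IsCell a b r → r ∉ I → r ≤ q → r = q) ∧ p ≤ q}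

/-- The staircase order ideal `S_r = {(i,j) : i + j < r}` of `[a] × [b]`
(0-indexed; with 1-based coordinates this is `i + j - 2 < r`). -/
def Stair (a b r : ℕ) : Set (ℕ × ℕ) :=
  {p | IsCell a b p ∧ p.1 + p.2 < r}

/-- The q-integer `[n]_q = 1 + q + ⋯ + q^(n-1)` as a polynomial in `ℤ[q]`. -/
noncomputable def qnat (n : ℕ) : Polynomial ℤ := ∑ i ∈ Finset.range n, X ^ i

/-- The q-factorial `[n]_q! = [n]_q [n-1]_q ⋯ [1]_q`. -/
noncomputable def qfact (n : ℕ) : Polynomial ℤ := ∏ i ∈ Finset.range n, qnat (i + 1)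

/-- `p` is a cell of the toothbrush shape `(2,2,2,1^(k-2))` (cells indexed
from 0): three rows of length 2 followed by `k - 2` rows of length 1. -/
def TCell (k : ℕ) (p : ℕ × ℕ) : Prop :=
  (p.1 < 3 ∧ p.2 < 2) ∨ (p.1 < k + 1 ∧ p.2 = 0)

/-- A standard Young tableau of toothbrush shape `(2,2,2,1^(k-2))`: a bijective
filling of the `k + 4` cells by the values `1, …, k + 4`, strictly increasing
along rows and columns, normalized to be `0` outside the shape. -/
def IsToothSYT (k : ℕ) (T : ℕ × ℕ → ℕ) : Prop :=
  Set.BijOn T {p | TCell k p} (Set.Icc 1 (k + 4)) ∧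
  (∀ i j j', j < j' → TCell k (i, j) → TCell k (i, j') → T (i, j) < T (i, j')) ∧
  (∀ i i' j, i < i' → TCell k (i, j) → TCell k (i', j) → T (i, j) < T (i', j)) ∧
  (∀ p, ¬ TCell k p → T p = 0)

/-- The map `Θ` sending an increasing tableau `T ∈ Inc^(a+b)(a × b)` to the
order ideal `{(a-i+1, b-j+1) : T(i,j) = i+j}` of `[a] × [b]` (written here with
0-indexed cells and the corresponding entry condition `T i j = i + j + 2`). -/
def theta (a b : ℕ) (T : ℕ → ℕ → ℕ) : Set (ℕ × ℕ) :=
  {p | ∃ i j, i < a ∧ j < b ∧ T i j = i + j + 2 ∧ p = (a - 1 - i, b - 1 - j)}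

/-- The staircase tableau with jump at diagonal `r`. -/
def stairT (a b r : ℕ) : ℕ → ℕ → ℕ := fun i j =>
  if i < a ∧ j < b then (if i + j < r then i + j + 1 else i + j + 2) else 0

lemma inc_bounds {a b : ℕ} {T : ℕ → ℕ → ℕ} (hT : IsInc a b (a + b) T) :
    ∀ i j, i < a → j < b → i + j + 1 ≤ T i j ∧ T i j ≤ i + j + 2 := by
  obtain ⟨hbd, hrow, hcol, _⟩ := hT
  have low : ∀ d i j, i < a → j < b → i + j = d → i + j + 1 ≤ T i j := by
    intro d
    induction d using Nat.strong_induction_on with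
    | _ d ih =>
      intro i j hi hj hd
      rcases Nat.eq_zero_or_pos i with h0 | hpos
      · rcases Nat.eq_zero_or_pos j with h00 | hjp
        · subst h0; subst h00; have := (hbd 0 0 hi hj).1; omega
        · have h1 := hrow i (j - 1) j hi (by omega) hj
          have h2 := ih (d - 1) (by omega) i (j - 1) hi (by omega) (by omega)
          omega
      · have h1 := hcol (i - 1) i j (by omega) hi hj
        have h2 := ih (d - 1) (by omega) (i - 1) j (by omega) hj (by omega)
        omega
  have high : ∀ d i j, i < a → j < b → (a - 1 - i) + (b - 1 - j) = d → T i j ≤ i + j + 2 := by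
    intro d
    induction d using Nat.strong_induction_on with
    | _ d ih =>
      intro i j hi hj hd
      rcases Nat.lt_or_ge (i + 1) a with hia | hia
      · have h1 := hcol i (i + 1) j (by omega) hia hj
        have h2 := ih (d - 1) (by omega) (i + 1) j hia hj (by omega)
        omega
      · rcases Nat.lt_or_ge (j + 1) b with hjb | hjb
        · have h1 := hrow i j (j + 1) hi (by omega) hjb
          have h2 := ih (d - 1) (by omega) i (j + 1) hi hjb (by omega)
          omega
        · have h3 := (hbd i j hi hj).2; omega
  exact fun i j hi hj => ⟨low (i + j) i j hi hj rfl, high _ i j hi hj rfl⟩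

lemma jump {a b : ℕ} {T : ℕ → ℕ → ℕ} (hT : IsInc a b (a + b) T)
    {i j i' j' : ℕ} (hii : i ≤ i') (hjj : j ≤ j') (hi' : i' < a) (hj' : j' < b)
    (h : T i j = i + j + 2) : T i' j' = i' + j' + 2 := by
  have bounds := inc_bounds hT
  obtain ⟨_, hrow, hcol, _⟩ := hT
  have hjb : j < b := lt_of_le_of_lt hjj hj'
  have step1 : ∀ k, i ≤ k → k < a → T k j = k + j + 2 := by
    intro k hk
    induction k, hk using Nat.le_induction with
    | base => intro _; exact h
    | succ k hk ih =>
      intro hka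
      have h1 := hcol k (k + 1) j (by omega) hka hjb
      have h2 := ih (by omega)
      have h3 := (bounds (k + 1) j hka hjb).2
      omega
  have hmid := step1 i' hii hi'
  have step2 : ∀ k, j ≤ k → k < b → T i' k = i' + k + 2 := by
    intro k hk
    induction k, hk using Nat.le_induction with
    | base => intro _; exact hmid
    | succ k hk ih =>
      intro hkb
      have h1 := hrow i' k (k + 1) hi' (by omega) hkb
      have h2 := ih (by omega)
      have h3 := (bounds i' (k + 1) hi' hkb).2
      omega
  exact step2 j' hjj hj'

lemma main_iff {a b : ℕ} (ha : 1 ≤ a) (hb : 1 ≤ b) (T : ℕ → ℕ → ℕ)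
    (hT : IsInc a b (a + b) T) :
    ¬ IsPacked a b (a + b) T ↔
      ∃ r ≤ a + b - 1, ∀ i j, i < a → j < b →
        (i + j < r → T i j = i + j + 1) ∧ (r ≤ i + j → T i j = i + j + 2) := by
  have bounds := inc_bounds hT
  constructor
  · intro hnp
    rw [IsPacked] at hnp
    push_neg at hnp
    obtain ⟨v, hv1, hv2, hmiss⟩ := hnp
    refine ⟨v - 1, by omega, fun i j hi hj => ?_⟩
    have hB := bounds i j hi hj
    rcases Nat.lt_or_ge (i + j) (v - 1) with hlt | hge
    · refine ⟨fun _ => ?_, fun h => by omega⟩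
      by_contra hne
      have hT2 : T i j = i + j + 2 := by omega
      set i2 := min (a - 1) (v - 2 - j) with hi2
      have hc : i ≤ i2 ∧ j ≤ v - 2 - i2 ∧ i2 < a ∧ v - 2 - i2 < b ∧ i2 + (v - 2 - i2) = v - 2 := by
        omega
      have hjmp := jump hT hc.1 hc.2.1 hc.2.2.1 hc.2.2.2.1 hT2
      have := hmiss i2 (v - 2 - i2)
      omega
    · refine ⟨fun h => by omega, fun _ => ?_⟩
      set i1 := min i (v - 1) with hi1
      have hc : i1 ≤ i ∧ v - 1 - i1 ≤ j ∧ i1 < a ∧ v - 1 - i1 < b ∧ i1 + (v - 1 - i1) = v - 1 := by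
        omega
      have hB1 := bounds i1 (v - 1 - i1) hc.2.2.1 hc.2.2.2.1
      have hm := hmiss i1 (v - 1 - i1)
      have hT1 : T i1 (v - 1 - i1) = i1 + (v - 1 - i1) + 2 := by omega
      exact jump hT hc.1 hc.2.1 hi hj hT1
  · rintro ⟨r, hr, hform⟩ hp
    obtain ⟨i, j, hi, hj, hij⟩ := hp (r + 1) (by omega) (by omega)
    have := hform i j hi hj
    omega

lemma stair_inc {a b : ℕ} (ha : 1 ≤ a) (hb : 1 ≤ b) (r : ℕ) :
    IsInc a b (a + b) (stairT a b r) := by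
  refine ⟨fun i j hi hj => ?_, fun i j j' hi hjj hj' => ?_, fun i i' j hii hi' hj => ?_,
    fun i j h => ?_⟩ <;> simp only [stairT] <;> split_ifs <;> omega

lemma stair_formula {a b r : ℕ} {i j : ℕ} (hi : i < a) (hj : j < b) :
    (i + j < r → stairT a b r i j = i + j + 1) ∧ (r ≤ i + j → stairT a b r i j = i + j + 2) := by
  simp only [stairT]; split_ifs <;> omega

theorem stmt9 (a b : ℕ) (ha : 1 ≤ a) (hb : 1 ≤ b) :
    (∀ T : ℕ → ℕ → ℕ, IsInc a b (a + b) T →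
      (¬ IsPacked a b (a + b) T ↔
        ∃ r ≤ a + b - 1, ∀ i j, i < a → j < b →
          (i + j < r → T i j = i + j + 1) ∧ (r ≤ i + j → T i j = i + j + 2))) ∧
    {T : ℕ → ℕ → ℕ | IsInc a b (a + b) T ∧ ¬ IsPacked a b (a + b) T}.ncard = a + b := by
  refine ⟨fun T hT => main_iff ha hb T hT, ?_⟩
  have hset : {T : ℕ → ℕ → ℕ | IsInc a b (a + b) T ∧ ¬ IsPacked a b (a + b) T}
      = (stairT a b) '' ((Finset.range (a + b) : Finset ℕ) : Set ℕ) := by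
    ext T
    simp only [Set.mem_setOf_eq, Set.mem_image, Finset.coe_range, Set.mem_Iio]
    constructor
    · rintro ⟨hT, hnp⟩
      obtain ⟨r, hr, hform⟩ := (main_iff ha hb T hT).mp hnp
      refine ⟨r, by omega, ?_⟩
      funext i j
      by_cases hc : i < a ∧ j < b
      · have := hform i j hc.1 hc.2
        simp only [stairT, if_pos hc]
        split_ifs with h
        · exact (this.1 h).symm
        · exact (this.2 (by omega)).symm
      · rw [hT.2.2.2 i j hc]; simp only [stairT, if_neg hc]
    · rintro ⟨r, hr, rfl⟩
      refine ⟨stair_inc ha hb r, (main_iff ha hb _ (stair_inc ha hb r)).mpr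
        ⟨r, by omega, fun i j hi hj => stair_formula hi hj⟩⟩
  rw [hset, Set.ncard_image_of_injOn, Set.ncard_coe_finset, Finset.card_range]
  intro r hr r' hr' heq
  simp only [Finset.coe_range, Set.mem_Iio] at hr hr'
  by_contra hne
  have key : ∀ s s', s < s' → s' < a + b → stairT a b s ≠ stairT a b s' := by
    intro s s' hss hs' he
    set i := min s (a - 1) with hi
    have hc : i < a ∧ s - i < b ∧ i + (s - i) = s := by omega
    have h1 := congrFun (congrFun he i) (s - i)
    simp only [stairT, if_pos (And.intro hc.1 hc.2.1)] at h1
    split_ifs at h1 <;> omega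
  rcases Nat.lt_or_ge r r' with h | h
  · exact key r r' h hr' heq
  · exact key r' r (by omega) hr heq.symm
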